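/- For Fibonacci quaternions and n ≥ 1, Q_{n−1} Q_{n+2} − Q_n Q_{n+1} = (−1)ⁿ (2 + 4i + 6j + k). -/

import Mathlib

open Quaternion TrivSqZeroExt DualNumber

noncomputable section

/-- The n-th Fibonacci quaternion Q_n = F_n + i F_{n+1} + j F_{n+2} + k F_{n+3}. -/
def fibQ (n : ℕ) : ℍ[ℝ] :=
  ⟨Nat.fib n, Nat.fib (n+1), Nat.fib (n+2), Nat.fib (n+3)⟩

/-- Lucas numbers: L_0 = 2, L_1 = 1. -/
def lucas : ℕ → ℕ
  | 0 => 2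
  | 1 => 1
  | n + 2 => lucas n + lucas (n+1)

/-- The n-th Lucas quaternion K_n = L_n + i L_{n+1} + j L_{n+2} + k L_{n+3}. -/
def lucasQ (n : ℕ) : ℍ[ℝ] :=
  ⟨lucas n, lucas (n+1), lucas (n+2), lucas (n+3)⟩

/-- The n-th dual Fibonacci quaternion Q̃_n = Q_n + ε Q_{n+1}. -/
def dQ (n : ℕ) : DualNumber ℍ[ℝ] := inl (fibQ n) + inl (fibQ (n+1)) * ε

/-- The n-th dual Lucas quaternion K̃_n = K_n + ε K_{n+1}. -/
def dK (n : ℕ) : DualNumber ℍ[ℝ] := inl (lucasQ n) + inl (lucasQ (n+1)) * ε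

/-- Conjugate of the dual Fibonacci quaternion (componentwise quaternion conjugation). -/
def dQconj (n : ℕ) : DualNumber ℍ[ℝ] := inl (star (fibQ n)) + inl (star (fibQ (n+1))) * ε

/-- The dual Fibonacci number F̃_n = F_n + ε F_{n+1} as a scalar dual quaternion. -/
def dF (n : ℕ) : DualNumber ℍ[ℝ] :=
  inl ((Nat.fib n : ℝ) : ℍ[ℝ]) + inl ((Nat.fib (n+1) : ℝ) : ℍ[ℝ]) * ε

/-- The dual Lucas number L̃_n = L_n + ε L_{n+1} as a scalar dual quaternion. -/
def dL (n : ℕ) : DualNumber ℍ[ℝ] :=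
  inl ((lucas n : ℝ) : ℍ[ℝ]) + inl ((lucas (n+1) : ℝ) : ℍ[ℝ]) * ε

def qi : ℍ[ℝ] := ⟨0,1,0,0⟩
def qj : ℍ[ℝ] := ⟨0,0,1,0⟩
def qk : ℍ[ℝ] := ⟨0,0,0,1⟩

/-! The d'Ocagne-type difference `x m * x (m + 3) - x (m + 1) * x (m + 2)` of any sequence
satisfying the Fibonacci recurrence in a (not necessarily commutative) ring changes sign at each
step, so it equals `(-1) ^ m` times its value at `m = 0`. The Fibonacci quaternions satisfy the
recurrence, and `Q₀ Q₃ - Q₁ Q₂ = -(2 + 4i + 6j + k)` is a direct computation. -/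

section FibonacciRecurrence

variable {R : Type*} [Ring R] {f : ℕ → R}

theorem docagne_succ (hf : ∀ n, f (n + 2) = f n + f (n + 1)) (m : ℕ) :
    f (m + 1) * f (m + 4) - f (m + 2) * f (m + 3) =
      -(f m * f (m + 3) - f (m + 1) * f (m + 2)) := by
  rw [show f (m + 4) = f (m + 2) + f (m + 3) from hf (m + 2), hf m]
  noncomm_ring

theorem docagne_of_fib_rec (hf : ∀ n, f (n + 2) = f n + f (n + 1)) (m : ℕ) :
    f m * f (m + 3) - f (m + 1) * f (m + 2) = (-1) ^ m * (f 0 * f 3 - f 1 * f 2) := by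
  induction m with
  | zero => simp
  | succ m ih => rw [docagne_succ hf, ih, pow_succ, mul_assoc, neg_one_mul, mul_neg]

end FibonacciRecurrence

@[simp] theorem fibQ_re (n : ℕ) : (fibQ n).re = Nat.fib n := rfl
@[simp] theorem fibQ_imI (n : ℕ) : (fibQ n).imI = Nat.fib (n + 1) := rfl
@[simp] theorem fibQ_imJ (n : ℕ) : (fibQ n).imJ = Nat.fib (n + 2) := rfl
@[simp] theorem fibQ_imK (n : ℕ) : (fibQ n).imK = Nat.fib (n + 3) := rfl

theorem fibQ_add_two (n : ℕ) : fibQ (n + 2) = fibQ n + fibQ (n + 1) := by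
  ext <;> simp [Nat.fib_add_two]

theorem fibQ_docagne_zero : fibQ 0 * fibQ 3 - fibQ 1 * fibQ 2 = -(2 + 4 * qi + 6 * qj + qk) := by
  -- `ℍ[ℝ]` has component lemmas for casts of naturals but none for numerals.
  simp only [← Nat.cast_ofNat (R := ℍ[ℝ])]
  ext <;> simp [Quaternion.re_mul, Quaternion.imI_mul, Quaternion.imJ_mul, Quaternion.imK_mul,
    Nat.fib_add_two, -Nat.cast_ofNat] <;> simp [qi, qj, qk] <;> norm_num

theorem fib_quaternion_docagne (n : ℕ) (hn : 1 ≤ n) :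
    fibQ (n-1) * fibQ (n+2) - fibQ n * fibQ (n+1) =
      ((-1 : ℝ) ^ n) • (2 + 4 * qi + 6 * qj + qk) := by
  obtain ⟨m, rfl⟩ : ∃ m, n = m + 1 := ⟨n - 1, by omega⟩
  rw [Nat.add_sub_cancel, docagne_of_fib_rec fibQ_add_two, fibQ_docagne_zero, Algebra.smul_def,
    map_pow, map_neg, map_one, pow_succ, mul_assoc, neg_one_mul, mul_neg]
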